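/- For every a ∈ ℝ and every k ∈ ℕ, ∫_ℝ e^{2ax} h_k(x)² dx = e^{a²} · Σ_{j=0}^{k} (k choose j) · (2a²)^j / j!. -/

import Mathlib

open MeasureTheory

/-- The physicists' Hermite polynomial `H_k` on `ℝ`. -/
noncomputable def physHermiteR (k : ℕ) (x : ℝ) : ℝ :=
  (-1) ^ k * Real.exp (x ^ 2) * iteratedDeriv k (fun t : ℝ => Real.exp (-t ^ 2)) x

/-- The Hermite function `h_k` on `ℝ`. -/
noncomputable def hermiteFunR (k : ℕ) (x : ℝ) : ℝ :=
  (Real.sqrt (2 ^ k * Nat.factorial k * Real.sqrt Real.pi))⁻¹ *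
    physHermiteR k x * Real.exp (-x ^ 2 / 2)

/-! Let `M_a(p) = ∫ p(x) e^{2ax - x²} dx` on real polynomials. Integrating the derivative
of `p(x) e^{2ax - x²}` gives `M_a(2Xp) = M_a(p' + 2ap)`, so the recurrence
`H_{l+1} = 2X H_l - H_l'` moves a factor `H_l` onto the other factor as the operator
`(2a + D)^l`. Expanding `(2a + D)^k H_k` binomially with `D^{k-n} H_k = 2^{k-n} (k!/n!) H_n`
and `M_a(H_n) = (2a)^n √π e^{a²}` gives
`M_a(H_k²) = 2^k k! √π e^{a²} Σ_n (k choose n) (2a²)^n / n!`,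
and `2^k k! √π` is exactly the normalisation of `h_k`. -/

open Polynomial Real

noncomputable def physHermite : ℕ → ℝ[X]
  | 0 => 1
  | k + 1 => 2 * X * physHermite k - derivative (physHermite k)

theorem physHermite_succ (k : ℕ) :
    physHermite (k + 1) = 2 * X * physHermite k - derivative (physHermite k) := rfl

theorem derivative_physHermite_succ (k : ℕ) :
    derivative (physHermite (k + 1)) = (2 * (k + 1)) • physHermite k := by
  induction k with
  | zero => simp [physHermite]
  | succ k ih =>
    rw [physHermite_succ (k + 1), derivative_sub, derivative_mul, ih, derivative_smul,
      physHermite_succ k]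
    simp only [derivative_mul, derivative_ofNat, derivative_X, nsmul_eq_mul]
    push_cast
    ring

theorem pow_derivative_physHermite (n j : ℕ) :
    (derivative ^ j : Module.End ℝ ℝ[X]) (physHermite (n + j))
      = (2 ^ j * (n + j).descFactorial j) • physHermite n := by
  induction j with
  | zero => simp
  | succ j ih =>
    rw [pow_succ, Module.End.mul_apply, ← add_assoc, derivative_physHermite_succ, map_nsmul, ih,
      smul_smul, Nat.succ_descFactorial_succ]
    ring_nf

theorem iteratedDeriv_exp_neg_sq (k : ℕ) :
    iteratedDeriv k (fun t : ℝ => exp (-t ^ 2))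
      = fun x => (-1) ^ k * (physHermite k).eval x * exp (-x ^ 2) := by
  induction k with
  | zero => simp [physHermite]
  | succ k ih =>
    ext x
    have hexp : HasDerivAt (fun y : ℝ => exp (-y ^ 2)) (-(2 * x) * exp (-x ^ 2)) x := by
      simpa [mul_comm] using ((hasDerivAt_pow 2 x).neg).exp
    have hderiv := (((physHermite k).hasDerivAt x).fun_mul hexp).const_mul ((-1 : ℝ) ^ k)
    rw [iteratedDeriv_succ, ih]
    simp only [mul_assoc] at hderiv ⊢
    rw [hderiv.deriv, physHermite_succ]
    simp only [eval_sub, eval_mul, eval_ofNat, eval_X]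
    ring

theorem physHermiteR_eq_eval (k : ℕ) (x : ℝ) : physHermiteR k x = (physHermite k).eval x := by
  have hsq : ((-1 : ℝ) ^ k) ^ 2 = 1 := by rw [← pow_mul, pow_mul', neg_one_sq, one_pow]
  have hexp : exp (x ^ 2) * exp (-x ^ 2) = 1 := by rw [← exp_add, add_neg_cancel, exp_zero]
  rw [physHermiteR, iteratedDeriv_exp_neg_sq]
  linear_combination (physHermite k).eval x * ((-1 : ℝ) ^ k) ^ 2 * hexp
    + (physHermite k).eval x * hsq

theorem integrable_eval_mul_exp_neg_sq (p : ℝ[X]) :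
    Integrable fun x : ℝ => p.eval x * exp (-x ^ 2) := by
  induction p using Polynomial.induction_on' with
  | add p q hp hq => simpa only [eval_add, add_mul] using hp.fun_add hq
  | monomial n c =>
    have hpow : Integrable fun x : ℝ => x ^ (n : ℝ) * exp (-1 * x ^ 2) :=
      integrable_rpow_mul_exp_neg_mul_sq one_pos (by linarith [(n.cast_nonneg : (0 : ℝ) ≤ n)])
    simpa only [eval_monomial, rpow_natCast, neg_one_mul, mul_assoc] using hpow.const_mul c

theorem exp_two_mul_sub_sq (a x : ℝ) :
    exp (2 * a * x - x ^ 2) = exp (a ^ 2) * exp (-(x - a) ^ 2) := by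
  rw [← exp_add]; ring_nf

theorem integrable_eval_mul_exp_two_mul_sub_sq (a : ℝ) (p : ℝ[X]) :
    Integrable fun x : ℝ => p.eval x * exp (2 * a * x - x ^ 2) := by
  have hshift := ((integrable_eval_mul_exp_neg_sq (p.comp (X + C a))).comp_sub_right a).const_mul
    (exp (a ^ 2))
  refine hshift.congr (ae_of_all _ fun x => ?_)
  simp only [eval_comp, eval_add, eval_X, eval_C, sub_add_cancel, exp_two_mul_sub_sq]
  ring

noncomputable def gaussMoment (a : ℝ) : ℝ[X] →ₗ[ℝ] ℝ where
  toFun p := ∫ x, p.eval x * exp (2 * a * x - x ^ 2)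
  map_add' p q := by
    simp only [eval_add, add_mul]
    exact integral_add (integrable_eval_mul_exp_two_mul_sub_sq a p)
      (integrable_eval_mul_exp_two_mul_sub_sq a q)
  map_smul' c p := by
    simp only [eval_smul, smul_eq_mul, mul_assoc, integral_const_mul, RingHom.id_apply]

theorem gaussMoment_apply (a : ℝ) (p : ℝ[X]) :
    gaussMoment a p = ∫ x, p.eval x * exp (2 * a * x - x ^ 2) := rfl

theorem gaussMoment_one (a : ℝ) : gaussMoment a 1 = √π * exp (a ^ 2) := by
  simp only [gaussMoment_apply, eval_one, one_mul, exp_two_mul_sub_sq, integral_const_mul]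
  rw [integral_sub_right_eq_self (fun y => exp (-y ^ 2)) a]
  simpa [mul_comm] using integral_gaussian 1

theorem gaussMoment_two_mul_X_mul (a : ℝ) (p : ℝ[X]) :
    gaussMoment a (2 * X * p) = gaussMoment a (derivative p + (2 * a) • p) := by
  have hderiv (x : ℝ) : HasDerivAt (fun y => p.eval y * exp (2 * a * y - y ^ 2))
      ((derivative p + (2 * a) • p - 2 * X * p).eval x * exp (2 * a * x - x ^ 2)) x := by
    have hquad : HasDerivAt (fun y : ℝ => 2 * a * y - y ^ 2) (2 * a - 2 * x) x := by
      simpa using ((hasDerivAt_id x).const_mul (2 * a)).fun_sub (hasDerivAt_pow 2 x)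
    refine ((p.hasDerivAt x).mul hquad.exp).congr_deriv ?_
    simp only [eval_sub, eval_add, eval_smul, eval_mul, eval_ofNat, eval_X, smul_eq_mul]
    ring
  have hzero := integral_eq_zero_of_hasDerivAt_of_integrable hderiv
    (integrable_eval_mul_exp_two_mul_sub_sq a _) (integrable_eval_mul_exp_two_mul_sub_sq a p)
  rw [← gaussMoment_apply, map_sub] at hzero
  linarith

theorem gaussMoment_physHermite (a : ℝ) (m : ℕ) :
    gaussMoment a (physHermite m) = (2 * a) ^ m * (√π * exp (a ^ 2)) := by
  induction m with
  | zero => simp [physHermite, gaussMoment_one]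
  | succ m ih =>
    rw [physHermite_succ, map_sub, gaussMoment_two_mul_X_mul, map_add, map_smul, ih, smul_eq_mul]
    ring

theorem gaussMoment_physHermite_mul (a : ℝ) (l : ℕ) (q : ℝ[X]) :
    gaussMoment a (physHermite l * q)
      = gaussMoment a ((((2 * a) • 1 + derivative : Module.End ℝ ℝ[X]) ^ l) q) := by
  induction l generalizing q with
  | zero => simp [physHermite]
  | succ l ih =>
    rw [pow_succ, Module.End.mul_apply, ← ih, physHermite_succ, sub_mul, mul_assoc, map_sub,
      gaussMoment_two_mul_X_mul, ← map_sub]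
    congr 1
    simp only [derivative_mul, LinearMap.add_apply, LinearMap.smul_apply, Module.End.one_apply,
      smul_eq_C_mul]
    ring

theorem gaussMoment_physHermite_sq (a : ℝ) (k : ℕ) :
    gaussMoment a (physHermite k * physHermite k)
      = 2 ^ k * k.factorial * (√π * exp (a ^ 2))
          * ∑ n ∈ Finset.range (k + 1), k.choose n * (2 * a ^ 2) ^ n / n.factorial := by
  have hcomm : Commute ((2 * a) • 1 : Module.End ℝ ℝ[X]) derivative :=
    (Commute.one_left _).smul_left _
  rw [gaussMoment_physHermite_mul, hcomm.add_pow, LinearMap.sum_apply, map_sum, Finset.mul_sum]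
  refine Finset.sum_congr rfl fun n hn => ?_
  obtain ⟨j, rfl⟩ := Nat.exists_eq_add_of_le (Nat.lt_succ_iff.mp (Finset.mem_range.mp hn))
  have hfact : ((n + j).factorial : ℝ) = n.factorial * (n + j).descFactorial j := by
    rw [← Nat.factorial_mul_descFactorial (Nat.le_add_left j n), Nat.add_sub_cancel, Nat.cast_mul]
  rw [Nat.add_sub_cancel_left, _root_.smul_pow, one_pow, Module.End.mul_apply,
    Module.End.mul_apply, Module.End.natCast_apply, map_nsmul, pow_derivative_physHermite,
    LinearMap.smul_apply, Module.End.one_apply, map_smul, map_nsmul, map_nsmul,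
    gaussMoment_physHermite, hfact]
  field_simp
  simp only [nsmul_eq_mul, smul_eq_mul]
  push_cast
  ring

/-- `∫ℝ e^{2ax} h_k(x)² dx = e^{a²} L_k^0(-2a²)`, the right-hand side written via the
explicit formula for the Laguerre polynomial. -/
theorem stmt_6 (a : ℝ) (k : ℕ) :
    ∫ x : ℝ, Real.exp (2 * a * x) * hermiteFunR k x ^ 2
      = Real.exp (a ^ 2) *
          ∑ j ∈ Finset.range (k + 1),
            (Nat.choose k j : ℝ) * (2 * a ^ 2) ^ j / (Nat.factorial j : ℝ) := by
  have hnorm : 0 < 2 ^ k * (k.factorial : ℝ) * √π := by positivity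
  have hintegrand (x : ℝ) : exp (2 * a * x) * hermiteFunR k x ^ 2
      = (2 ^ k * k.factorial * √π)⁻¹
          * ((physHermite k * physHermite k).eval x * exp (2 * a * x - x ^ 2)) := by
    have hexp : exp (2 * a * x) * exp (-x ^ 2 / 2) ^ 2 = exp (2 * a * x - x ^ 2) := by
      rw [sq, ← exp_add, ← exp_add]; ring_nf
    rw [hermiteFunR, physHermiteR_eq_eval, eval_mul, ← hexp, mul_pow, mul_pow, inv_pow,
      sq_sqrt hnorm.le]
    ring
  simp only [hintegrand, integral_const_mul, ← gaussMoment_apply, gaussMoment_physHermite_sq]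
  field_simp
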